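/- arXiv:2209.09048 — 5 statements merged into one kernel-verified Lean document; each statement's English description precedes it below -/
import Mathlib

section
/- The injective Weisfeiler-Leman update is the fastest-converging renep function: if (πᵢ) is produced by the injective WL update and (σᵢ) is produced by any renep function, both starting from the same coloring π₀ = σ₀, then for every i, πᵢ refines σᵢ. -/
def Refines {S : Type*} (π π' : S → ℕ) : Prop :=
  ∀ s₁ s₂ : S, π s₁ = π s₂ → π' s₁ = π' s₂

def nbhdColors {V : Type*} [Fintype V] [DecidableEq V] (G : SimpleGraph V)
    [DecidableRel G.Adj] (c : V → ℕ) (v : V) : Multiset ℕ :=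
  (G.neighborFinset v).val.map c

def Stable {V : Type*} [Fintype V] [DecidableEq V] (G : SimpleGraph V)
    [DecidableRel G.Adj] (c : V → ℕ) : Prop :=
  ∀ u v : V, c u = c v → nbhdColors G c u = nbhdColors G c v

/-- The injective WL update is the fastest-converging renep function:
the WL coloring refines any renep coloring at every iteration. -/
theorem wl_fastest_renep {V : Type*} [Fintype V] [DecidableEq V]
    (G : SimpleGraph V) [DecidableRel G.Adj]
    (π σ : ℕ → V → ℕ)
    (h0 : π 0 = σ 0)
    (hπ : ∀ i u v, π (i + 1) u = π (i + 1) v ↔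
      (π i u = π i v ∧ nbhdColors G (π i) u = nbhdColors G (π i) v))
    (ha : ∀ i, Refines (σ (i + 1)) (σ i))
    (hb : ∀ i, (Refines (σ (i + 1)) (σ i) ∧ Refines (σ i) (σ (i + 1))) ↔ Stable G (σ i))
    (hc : ∀ i, ¬ Stable G (σ i) →
      (Refines (σ (i + 1)) (σ i) ∧ ¬ Refines (σ i) (σ (i + 1))))
    (hd : ∀ i u v, σ i u = σ i v → nbhdColors G (σ i) u = nbhdColors G (σ i) v →
      σ (i + 1) u = σ (i + 1) v) :
    ∀ i, Refines (π i) (σ i) := by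
  intro i
  induction i with
  | zero => intro u v h; rw [← h0]; exact h
  | succ i ih =>
    intro u v h
    obtain ⟨h1, h2⟩ := (hπ i u v).mp h
    have hσ : σ i u = σ i v := ih u v h1
    -- factor σ i through π i
    classical
    let f : ℕ → ℕ := fun n => if hn : ∃ w, π i w = n then σ i hn.choose else 0
    have hf : ∀ w, σ i w = f (π i w) := by
      intro w
      have hn : ∃ w', π i w' = π i w := ⟨w, rfl⟩
      simp only [f, dif_pos hn]
      exact (ih _ _ hn.choose_spec).symm
    have hnb : nbhdColors G (σ i) u = nbhdColors G (σ i) v := by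
      unfold nbhdColors
      have : ∀ w, (G.neighborFinset w).val.map (σ i) =
          ((G.neighborFinset w).val.map (π i)).map f := by
        intro w
        rw [Multiset.map_map]
        exact Multiset.map_congr rfl (fun x _ => hf x)
      rw [this u, this v]
      unfold nbhdColors at h2
      rw [h2]
    exact hd i u v hσ hnb
end

section
/- If the injective Weisfeiler-Leman sequence starting from π₀ stabilizes after h iterations, then any renep-function sequence starting from π₀ stabilizes after at least h iterations (it needs at least as many iterations to reach the coarsest stable coloring). -/
/-- Two colorings are equivalent if they refine each other. -/
def EquivColoring {S : Type*} (π π' : S → ℕ) : Prop :=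
  Refines π π' ∧ Refines π' π

theorem Refines.trans' {S : Type*} {a b c : S → ℕ} (h1 : Refines a b) (h2 : Refines b c) :
    Refines a c := fun s t h => h2 s t (h1 s t h)

lemma refines_factor {S : Type*} {c c' : S → ℕ} (h : Refines c c') :
    ∃ g : ℕ → ℕ, ∀ w, c' w = g (c w) := by
  classical
  refine ⟨fun n => if hn : ∃ w, c w = n then c' hn.choose else 0, fun w => ?_⟩
  have hn : ∃ w', c w' = c w := ⟨w, rfl⟩
  simp only [dif_pos hn]
  exact (h _ _ hn.choose_spec).symm

lemma nbhd_refine {V : Type*} [Fintype V] [DecidableEq V] (G : SimpleGraph V)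
    [DecidableRel G.Adj] {c c' : V → ℕ} (h : Refines c c') {u v : V}
    (hn : nbhdColors G c u = nbhdColors G c v) :
    nbhdColors G c' u = nbhdColors G c' v := by
  obtain ⟨g, hg⟩ := refines_factor h
  have key : ∀ w, nbhdColors G c' w = (nbhdColors G c w).map g := by
    intro w
    simp [nbhdColors, Multiset.map_map, Function.comp, ← hg]
  rw [key u, key v, hn]

/-- If injective WL stabilizes (for the first time) after `h` iterations, then
any renep-function sequence starting from the same coloring needs at least `h`
iterations to stabilize. -/
theorem renep_needs_at_least_wl_iterations {V : Type*} [Fintype V] [DecidableEq V]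
    (G : SimpleGraph V) [DecidableRel G.Adj]
    (π σ : ℕ → V → ℕ)
    (h0 : π 0 = σ 0)
    (hπ : ∀ i u v, π (i + 1) u = π (i + 1) v ↔
      (π i u = π i v ∧ nbhdColors G (π i) u = nbhdColors G (π i) v))
    (ha : ∀ i, Refines (σ (i + 1)) (σ i))
    (hb : ∀ i, EquivColoring (σ (i + 1)) (σ i) ↔ Stable G (σ i))
    (hc : ∀ i, ¬ Stable G (σ i) →
      (Refines (σ (i + 1)) (σ i) ∧ ¬ Refines (σ i) (σ (i + 1))))
    (hd : ∀ i u v, σ i u = σ i v → nbhdColors G (σ i) u = nbhdColors G (σ i) v →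
      σ (i + 1) u = σ (i + 1) v)
    (h : ℕ)
    (hstab : EquivColoring (π h) (π (h + 1)))
    (hfirst : ∀ i < h, ¬ EquivColoring (π i) (π (i + 1))) :
    ∀ j, EquivColoring (σ j) (σ (j + 1)) → h ≤ j := by
  intro j hj
  by_contra hlt
  push_neg at hlt
  have hstable : Stable G (σ j) := (hb j).mp ⟨hj.2, hj.1⟩
  have hps : ∀ i, Refines (π i) (σ i) := by
    intro i; induction i with
    | zero => rw [h0]; exact fun _ _ hh => hh
    | succ i ih =>
      intro u v huv
      obtain ⟨h1, h2⟩ := (hπ i u v).mp huv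
      exact hd i u v (ih u v h1) (nbhd_refine G ih h2)
  have hs0 : Refines (σ j) (σ 0) := by
    clear hj hlt hstable
    induction j with
    | zero => exact fun _ _ hh => hh
    | succ j ihj => exact Refines.trans' (ha j) ihj
  have hsp : ∀ i, Refines (σ j) (π i) := by
    intro i; induction i with
    | zero => rw [h0]; exact hs0
    | succ i ih =>
      intro u v huv
      exact (hπ i u v).mpr ⟨ih u v huv, nbhd_refine G ih (hstable u v huv)⟩
  exact hfirst j hlt ⟨Refines.trans' (hps j) (hsp (j + 1)),
    fun u v huv => ((hπ j u v).mp huv).1⟩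
end

section
/- A clustering-based update is renep provided each non-singleton group of distinct neighbor multisets is split into at least two clusters: if for every color class C of πᵢ containing vertices with at least two distinct neighbor color multisets, the update partitions C so that (i) vertices with equal neighbor multisets stay in the same cell and (ii) C is split into at least two cells, and color classes whose vertices all share one neighbor multiset are kept intact, then the resulting update satisfies all four renep conditions. -/
/-- A clustering-based update satisfying: the new coloring partitions each old color
class, vertices with equal neighbor multisets stay together, each class containing
two distinct neighbor multisets is split into at least two cells, and classes with a
single neighbor multiset are kept intact — is a renep function. -/
theorem clustering_update_is_renep {V : Type*} [Fintype V] [DecidableEq V]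
    (G : SimpleGraph V) [DecidableRel G.Adj]
    (π π' : V → ℕ)
    (hpart : Refines π' π)
    (hi : ∀ u v : V, π u = π v → nbhdColors G π u = nbhdColors G π v → π' u = π' v)
    (hii : ∀ u v : V, π u = π v → nbhdColors G π u ≠ nbhdColors G π v →
      ∃ x y : V, π x = π u ∧ π y = π u ∧ π' x ≠ π' y)
    (hintact : ∀ u v : V, π u = π v →
      (∀ x y : V, π x = π u → π y = π u → nbhdColors G π x = nbhdColors G π y) →
      π' u = π' v) :
    Refines π' π ∧
    ((Refines π' π ∧ Refines π π') ↔ Stable G π) ∧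
    (¬ Stable G π → (Refines π' π ∧ ¬ Refines π π')) ∧
    (∀ u v : V, π u = π v → nbhdColors G π u = nbhdColors G π v → π' u = π' v) := by
  have key : Refines π π' ↔ Stable G π := by
    constructor
    · intro h u v huv
      by_contra hne
      obtain ⟨x, y, hx, hy, hxy⟩ := hii u v huv hne
      exact hxy (h x y (hx.trans hy.symm))
    · intro hs u v huv
      exact hintact u v huv (fun x y hx hy => hs x y (hx.trans hy.symm))
  refine ⟨hpart, ⟨fun h => key.mp h.2, fun h => ⟨hpart, key.mpr h⟩⟩,
    fun h => ⟨hpart, fun h' => h (key.mp h')⟩, hi⟩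
end

section
/- The join of stable colorings refining π₀ is stable: the coarsest common coarsening of all stable colorings refining π₀, defined by u ∼ v iff there exists a stable coloring c refining π₀ with c(u)=c(v), has transitive closure whose induced coloring is stable and refines π₀; this yields existence of the coarsest stable coloring. -/
/-- The join of all stable colorings refining `π₀` (the equivalence relation
generated by `u ∼ v` iff some stable coloring refining `π₀` identifies `u` and `v`)
induces a coloring that is stable, refines `π₀`, and is refined by every stable
coloring refining `π₀`; in particular the coarsest stable coloring exists. -/
theorem join_of_stable_colorings {V : Type*} [Fintype V] [DecidableEq V]
    (G : SimpleGraph V) [DecidableRel G.Adj] (π₀ : V → ℕ) :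
    (∀ p : V → ℕ,
      (∀ u v : V, p u = p v ↔ Relation.EqvGen
        (fun u v => ∃ c : V → ℕ, Stable G c ∧ Refines c π₀ ∧ c u = c v) u v) →
      Stable G p ∧ Refines p π₀ ∧
        ∀ c : V → ℕ, Stable G c → Refines c π₀ → Refines c p) ∧
    (∃ p : V → ℕ, Stable G p ∧ Refines p π₀ ∧
        ∀ c : V → ℕ, Stable G c → Refines c π₀ → Refines c p) := by
  classical
  have main : ∀ p : V → ℕ,
      (∀ u v : V, p u = p v ↔ Relation.EqvGen
        (fun u v => ∃ c : V → ℕ, Stable G c ∧ Refines c π₀ ∧ c u = c v) u v) →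
      Stable G p ∧ Refines p π₀ ∧
        ∀ c : V → ℕ, Stable G c → Refines c π₀ → Refines c p := by
    intro p hp
    have key : ∀ c : V → ℕ, Stable G c → Refines c π₀ → Refines c p := by
      intro c hs href u v hcv
      exact (hp u v).2 (Relation.EqvGen.rel _ _ ⟨c, hs, href, hcv⟩)
    refine ⟨?_, ?_, key⟩
    · intro u v hpv
      have h := (hp u v).1 hpv
      clear hpv
      induction h with
      | rel u v h =>
        obtain ⟨c, hs, href, hcuv⟩ := h
        have hrefp := key c hs href
        have hfac : ∃ f : ℕ → ℕ, ∀ w, p w = f (c w) := by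
          refine ⟨fun n => if h : ∃ x, c x = n then p h.choose else 0, fun w => ?_⟩
          have hx : ∃ x, c x = c w := ⟨w, rfl⟩
          simp only [dif_pos hx]
          exact (hrefp _ _ hx.choose_spec).symm
        obtain ⟨f, hf⟩ := hfac
        have hc := hs u v hcuv
        unfold nbhdColors at hc ⊢
        calc (G.neighborFinset u).val.map p
            = ((G.neighborFinset u).val.map c).map f := by
              rw [Multiset.map_map]; exact Multiset.map_congr rfl (fun x _ => hf x)
          _ = ((G.neighborFinset v).val.map c).map f := by rw [hc]
          _ = (G.neighborFinset v).val.map p := by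
              rw [Multiset.map_map]; exact Multiset.map_congr rfl (fun x _ => (hf x).symm)
      | refl u => rfl
      | symm _ _ _ ih => exact ih.symm
      | trans _ _ _ _ _ ih1 ih2 => exact ih1.trans ih2
    · intro u v hpv
      have h := (hp u v).1 hpv
      clear hpv
      induction h with
      | rel u v h => obtain ⟨c, _, href, hcuv⟩ := h; exact href _ _ hcuv
      | refl u => rfl
      | symm _ _ _ ih => exact ih.symm
      | trans _ _ _ _ _ ih1 ih2 => exact ih1.trans ih2
  refine ⟨main, ?_⟩
  set r : V → V → Prop :=
    fun u v => ∃ c : V → ℕ, Stable G c ∧ Refines c π₀ ∧ c u = c v with hr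
  have : Finite (Quotient (Relation.EqvGen.setoid r)) := Quotient.finite _
  obtain ⟨n, ⟨e⟩⟩ := Finite.exists_equiv_fin (Quotient (Relation.EqvGen.setoid r))
  set p : V → ℕ := fun v => (e (Quotient.mk _ v) : ℕ) with hpdef
  have hp : ∀ u v : V, p u = p v ↔ Relation.EqvGen r u v := by
    intro u v
    constructor
    · intro h
      have h2 : (Quotient.mk _ u : Quotient (Relation.EqvGen.setoid r)) = Quotient.mk _ v :=
        e.injective (Fin.val_injective h)
      exact Quotient.exact h2
    · intro h
      have h2 : (Quotient.mk _ u : Quotient (Relation.EqvGen.setoid r)) = Quotient.mk _ v :=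
        Quotient.sound h
      simp [hpdef, h2]
  exact ⟨p, main p hp⟩
end

section
/- The Weisfeiler-Leman subtree kernel is positive semidefinite: for any finite set of graphs G₁,…,G_n, any h ≥ 0, the matrix K with K_{ab} = Σ_{i=0}^h Σ_{u ∈ V(G_a)} Σ_{v ∈ V(G_b)} δ(cᵢ(u), cᵢ(v)) is positive semidefinite, where cᵢ are the iteration-i WL colors (computed jointly on the disjoint union) and δ is the Dirac kernel. -/
open Finset in
/-- The Weisfeiler-Leman subtree kernel matrix is positive semidefinite: for a family
of `n` labeled graphs whose WL colors are computed jointly (on the disjoint union,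
i.e. per graph with a common injective relabeling function `z`), the Gram matrix of
the subtree kernel of height `h` is positive semidefinite. -/
theorem wl_subtree_kernel_psd
    (n : ℕ) (V : Fin n → Type) [∀ a, Fintype (V a)] [∀ a, DecidableEq (V a)]
    (G : ∀ a, SimpleGraph (V a)) [∀ a, DecidableRel (G a).Adj]
    (label : ∀ a, V a → ℕ)
    (z : ℕ × Multiset ℕ → ℕ) (hz : Function.Injective z)
    (c : ℕ → ∀ a, V a → ℕ)
    (hc0 : ∀ a v, c 0 a v = label a v)
    (hstep : ∀ i a v, c (i + 1) a v =
      z (c i a v, ((G a).neighborFinset v).val.map (c i a)))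
    (h : ℕ) (α : Fin n → ℝ) :
    0 ≤ ∑ a : Fin n, ∑ b : Fin n, α a * α b *
      (∑ i ∈ Finset.range (h + 1), ∑ u : V a, ∑ v : V b,
        (if c i a u = c i b v then (1 : ℝ) else 0)) := by
  classical
  have key : ∀ i : ℕ, 0 ≤ ∑ a : Fin n, ∑ b : Fin n, α a * α b *
      (∑ u : V a, ∑ v : V b, (if c i a u = c i b v then (1 : ℝ) else 0)) := by
    intro i
    set T : Finset ℕ :=
      Finset.univ.biUnion (fun a : Fin n => Finset.image (c i a) Finset.univ) with hT
    have hmem : ∀ (a : Fin n) (u : V a), c i a u ∈ T := by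
      intro a u
      simp only [hT, Finset.mem_biUnion, Finset.mem_image, Finset.mem_univ, true_and]
      exact ⟨a, u, rfl⟩
    set t : ∀ a : Fin n, V a → ℕ → ℝ :=
      fun a u k => if c i a u = k then 1 else 0 with ht
    have hδ : ∀ (a b : Fin n) (u : V a) (v : V b),
        (if c i a u = c i b v then (1 : ℝ) else 0) =
        ∑ k ∈ T, t a u k * t b v k := by
      intro a b u v
      rw [Finset.sum_eq_single (c i a u)]
      · simp [ht, eq_comm]
      · intro k hk hne
        simp only [ht]
        rw [if_neg fun h' => hne h'.symm, zero_mul]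
      · intro hnot; exact absurd (hmem a u) hnot
    have h1 : ∀ a b : Fin n,
        (∑ u : V a, ∑ v : V b, (if c i a u = c i b v then (1 : ℝ) else 0)) =
        ∑ k ∈ T, (∑ u : V a, t a u k) * (∑ v : V b, t b v k) := by
      intro a b
      simp_rw [hδ]
      calc (∑ u : V a, ∑ v : V b, ∑ k ∈ T, t a u k * t b v k)
          = ∑ u : V a, ∑ k ∈ T, ∑ v : V b, t a u k * t b v k :=
            Finset.sum_congr rfl fun u _ => Finset.sum_comm
        _ = ∑ k ∈ T, ∑ u : V a, ∑ v : V b, t a u k * t b v k :=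
            Finset.sum_comm
        _ = ∑ k ∈ T, (∑ u : V a, t a u k) * (∑ v : V b, t b v k) :=
            Finset.sum_congr rfl fun k _ => (Finset.sum_mul_sum _ _ _ _).symm
    have hfac : ∑ a : Fin n, ∑ b : Fin n, α a * α b *
        (∑ u : V a, ∑ v : V b, (if c i a u = c i b v then (1 : ℝ) else 0)) =
        ∑ k ∈ T, (∑ a : Fin n, α a * ∑ u : V a, t a u k) ^ 2 := by
      simp_rw [h1]
      calc (∑ a : Fin n, ∑ b : Fin n, α a * α b *
              ∑ k ∈ T, (∑ u : V a, t a u k) * (∑ v : V b, t b v k))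
          = ∑ a : Fin n, ∑ k ∈ T, ∑ b : Fin n,
              α a * α b * ((∑ u : V a, t a u k) * (∑ v : V b, t b v k)) := by
            refine Finset.sum_congr rfl fun a _ => ?_
            rw [← Finset.sum_comm]
            exact Finset.sum_congr rfl fun b _ => Finset.mul_sum _ _ _
        _ = ∑ k ∈ T, ∑ a : Fin n, ∑ b : Fin n,
              α a * α b * ((∑ u : V a, t a u k) * (∑ v : V b, t b v k)) :=
            Finset.sum_comm
        _ = ∑ k ∈ T, (∑ a : Fin n, α a * ∑ u : V a, t a u k) ^ 2 := by
            refine Finset.sum_congr rfl fun k _ => ?_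
            rw [sq, Finset.sum_mul_sum]
            refine Finset.sum_congr rfl fun a _ => Finset.sum_congr rfl fun b _ => ?_
            ring
    rw [hfac]
    exact Finset.sum_nonneg fun k _ => sq_nonneg _
  calc (0:ℝ) ≤ ∑ i ∈ Finset.range (h + 1), ∑ a : Fin n, ∑ b : Fin n, α a * α b *
        (∑ u : V a, ∑ v : V b, (if c i a u = c i b v then (1 : ℝ) else 0)) :=
      Finset.sum_nonneg fun i _ => key i
    _ = ∑ a : Fin n, ∑ b : Fin n, α a * α b *
        (∑ i ∈ Finset.range (h + 1), ∑ u : V a, ∑ v : V b,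
          (if c i a u = c i b v then (1 : ℝ) else 0)) := by
      rw [Finset.sum_comm]
      refine Finset.sum_congr rfl fun a _ => ?_
      rw [Finset.sum_comm]
      exact Finset.sum_congr rfl fun b _ => (Finset.mul_sum _ _ _).symm
end
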